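/- For integers ℓ ≥ 2 and k ≥ 1, the circular chromatic number of the signed bipartite graph BQ̂(ℓ, 2k+1) equals 4. -/

import Mathlib

open scoped Classical

/-- Adjacency relation of the cylindrical grid `C_{ℓ×m}`: vertex `v_{i,j}` is adjacent to
`v_{i+1,j-1}` and `v_{i+1,j}` (second index mod `m`). -/
def gridRel (ℓ m : ℕ) (x y : Fin ℓ × ZMod m) : Prop :=
  (y.1 : ℕ) = (x.1 : ℕ) + 1 ∧ (y.2 = x.2 - 1 ∨ y.2 = x.2)

/-- The positive edges of `BQ̂(ℓ, 2k+1)`: `v_{1,j}` is joined to `v_{2,j+k}` by a positive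
edge. -/
def bqOddPos (ℓ k : ℕ) :
    Option (Fin ℓ × ZMod (2 * k + 1)) → Option (Fin ℓ × ZMod (2 * k + 1)) → Prop
  | some x, some y => (x.1 : ℕ) = 0 ∧ (y.1 : ℕ) = 1 ∧ y.2 = x.2 + (k : ZMod (2 * k + 1))
  | _, _ => False

/-- Generating relation for the signed bipartite graph `BQ̂(ℓ, 2k+1)`: the cylindrical grid
`C_{ℓ×(2k+1)}` with all edges negative, plus positive edges `v_{1,j}v_{2,j+k}`, plus a new
vertex `u` (encoded as `none`) joined by negative edges to all vertices `v_{ℓ,j}`. -/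
def bqOddRel (ℓ k : ℕ) :
    Option (Fin ℓ × ZMod (2 * k + 1)) → Option (Fin ℓ × ZMod (2 * k + 1)) → Prop
  | some x, some y => gridRel ℓ (2 * k + 1) x y ∨ bqOddPos ℓ k (some x) (some y)
  | some x, none => (x.1 : ℕ) = ℓ - 1
  | none, _ => False

/-- The underlying graph of the signed bipartite graph `BQ̂(ℓ, 2k+1)`. -/
def BQOdd (ℓ k : ℕ) : SimpleGraph (Option (Fin ℓ × ZMod (2 * k + 1))) :=
  SimpleGraph.fromRel (bqOddRel ℓ k)

/-- A circular `r`-coloring of a signed graph `(G, σ)`, where the sign of an edge `uv` is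
positive iff `pos u v ∨ pos v u`:  vertices are mapped to the circle `O_r` (modelled as
`AddCircle r`) so that the endpoints of every negative edge are at distance at least `1`, and
the endpoints of every positive edge are at distance at least `1` from the antipode of each
other. -/
def IsSignedCircColoring {V : Type*} (r : ℝ) (G : SimpleGraph V) (pos : V → V → Prop)
    (c : V → AddCircle r) : Prop :=
  ∀ u v, G.Adj u v →
    if pos u v ∨ pos v u then 1 ≤ dist (c u) (c v + ((r / 2 : ℝ) : AddCircle r))
    else 1 ≤ dist (c u) (c v)

/-!
Upper bound: on the circle of length `4`, put row `i` at `i % 2` and the apex `u` at `2`. Points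
of adjacent rows are at distance `1`, and so is each from the antipode of the other, so every
edge is satisfied whatever its sign.

Lower bound: let `2 ≤ r < 4`. Call a row good (`HasSmallStepLift`) if its colours lift to reals
`g_j` with `|g_{j+1} - g_j| ≤ r - 2`. If row `i + 1` is good, lift each `v_{i,j}` into the window
`[g_j - (r - 1), g_j - 1]` below its neighbour `v_{i+1,j}`; since `r < 4` it then also lies in the
window below its other neighbour `v_{i+1,j-1}`, and row `i` is good. The apex is a constant, hence
good, row, so rows `1` and `0` (0-indexed) get such interlaced lifts `g` and `f`. A positive edge
`v_{0,j} v_{1,j+k}` makes `g_{j+k} - f_j` lie within `r/2 - 1` of some `n_j r`. Pairing `j` with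
`j + k + 1` and comparing with the two windows gives `n_j + n_{j+k+1} = 1`; summing over the
`2k + 1` columns yields `2 ∑ n_j = 2k + 1`, which is absurd.
-/

open Set

namespace AddCircle

variable {r : ℝ}

lemma coe_sub_zsmul_period (x : ℝ) (n : ℤ) : ((x - n • r : ℝ) : AddCircle r) = x := by
  rw [coe_sub, coe_zsmul, coe_period, smul_zero, sub_zero]

lemma norm_coe_le_abs (x : ℝ) : ‖(x : AddCircle r)‖ ≤ |x| :=
  QuotientAddGroup.norm_mk_le_norm

lemma sub_mem_Icc_of_one_le_dist {a b : ℝ} (h : 1 ≤ dist (a : AddCircle r) (b : AddCircle r))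
    (h₁ : -1 < b - a) (h₂ : b - a < r + 1) : b - a ∈ Icc 1 (r - 1) := by
  rw [dist_comm, dist_eq_norm, ← coe_sub] at h
  constructor
  · by_contra! hlt
    exact (h.trans (norm_coe_le_abs _)).not_gt (abs_lt.2 ⟨h₁, hlt⟩)
  · by_contra! hlt
    rw [← coe_sub_zsmul_period (b - a) 1, one_zsmul] at h
    exact (h.trans (norm_coe_le_abs _)).not_gt (abs_lt.2 ⟨by linarith, by linarith⟩)

lemma exists_coe_eq_sub_mem_Icc (hr : 0 < r) {z : AddCircle r} {b : ℝ}
    (h : 1 ≤ dist z (b : AddCircle r)) :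
    ∃ a : ℝ, (a : AddCircle r) = z ∧ b - a ∈ Icc 1 (r - 1) := by
  obtain ⟨y, rfl⟩ := QuotientAddGroup.mk_surjective z
  obtain ⟨hlo, hhi⟩ := sub_toIcoDiv_zsmul_mem_Ico hr 0 (b - y)
  set n := toIcoDiv hr 0 (b - y)
  have hcoe : ((y + n • r : ℝ) : AddCircle r) = y := by
    rw [← sub_neg_eq_add, ← neg_zsmul, coe_sub_zsmul_period]
  refine ⟨y + n • r, hcoe, ?_⟩
  rw [← hcoe] at h
  exact sub_mem_Icc_of_one_le_dist h (by linarith) (by linarith)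

lemma exists_abs_sub_zsmul_le_of_one_le_dist_add_half (hr : 0 < r) {a b : ℝ}
    (h : 1 ≤ dist (a : AddCircle r) ((b : AddCircle r) + ((r / 2 : ℝ) : AddCircle r))) :
    ∃ n : ℤ, |b - a - n • r| ≤ r / 2 - 1 := by
  obtain ⟨hlo, hhi⟩ := sub_toIcoDiv_zsmul_mem_Ico hr 0 (b + r / 2 - a)
  set n := toIcoDiv hr 0 (b + r / 2 - a)
  rw [← coe_add, ← coe_sub_zsmul_period (b + r / 2) n] at h
  have := sub_mem_Icc_of_one_le_dist h (by linarith) (by linarith)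
  refine ⟨n, abs_le.2 ⟨?_, ?_⟩⟩ <;> linarith [this.1, this.2]

end AddCircle

section SmallStepLift

variable {m : ℕ} {r : ℝ}

def HasSmallStepLift (x : ZMod m → AddCircle r) : Prop :=
  ∃ g : ZMod m → ℝ, (∀ j, (g j : AddCircle r) = x j) ∧ ∀ j, |g (j + 1) - g j| ≤ r - 2

lemma hasSmallStepLift_const (hr : 2 ≤ r) (z : AddCircle r) :
    HasSmallStepLift (fun _ : ZMod m => z) := by
  obtain ⟨y, rfl⟩ := QuotientAddGroup.mk_surjective z
  exact ⟨fun _ => y, fun _ => rfl, fun _ => by simpa using hr⟩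

lemma exists_lift_interlacing (hr : r < 4) {g : ZMod m → ℝ} {x y : ZMod m → AddCircle r}
    (hgy : ∀ j, (g j : AddCircle r) = y j) (hg : ∀ j, |g (j + 1) - g j| ≤ r - 2)
    (h₀ : ∀ j, 1 ≤ dist (x j) (y j)) (h₁ : ∀ j, 1 ≤ dist (x (j + 1)) (y j)) :
    ∃ f : ZMod m → ℝ, (∀ j, (f j : AddCircle r) = x j) ∧
      ∀ j, g j - f j ∈ Icc 1 (r - 1) ∧ g j - f (j + 1) ∈ Icc 1 (r - 1) := by
  have hr0 : 0 < r := by linarith [(abs_nonneg _).trans (hg 0)]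
  choose f hfx hfg using fun j =>
    AddCircle.exists_coe_eq_sub_mem_Icc hr0 ((hgy j).symm ▸ h₀ j)
  refine ⟨f, hfx, fun j => ⟨hfg j, ?_⟩⟩
  have h := h₁ j
  rw [← hfx, ← hgy] at h
  have hstep := abs_le.1 (hg j)
  have hwindow := hfg (j + 1)
  exact AddCircle.sub_mem_Icc_of_one_le_dist h (by linarith [hwindow.1]) (by linarith [hwindow.2])

lemma HasSmallStepLift.of_interlacing (hr : r < 4) {x y : ZMod m → AddCircle r}
    (hy : HasSmallStepLift y) (h₀ : ∀ j, 1 ≤ dist (x j) (y j))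
    (h₁ : ∀ j, 1 ≤ dist (x (j + 1)) (y j)) : HasSmallStepLift x := by
  obtain ⟨g, hgy, hg⟩ := hy
  obtain ⟨f, hfx, hfg⟩ := exists_lift_interlacing hr hgy hg h₀ h₁
  refine ⟨f, hfx, fun j => abs_le.2 ⟨?_, ?_⟩⟩ <;>
    linarith [(hfg j).1.1, (hfg j).1.2, (hfg j).2.1, (hfg j).2.2]

lemma HasSmallStepLift.of_chain (hr : r < 4) {x : ℕ → ZMod m → AddCircle r} {n : ℕ}
    (hadj : ∀ i < n, ∀ j,
      1 ≤ dist (x i j) (x (i + 1) j) ∧ 1 ≤ dist (x i (j + 1)) (x (i + 1) j))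
    (htop : HasSmallStepLift (x n)) {i : ℕ} (hi : i ≤ n) : HasSmallStepLift (x i) := by
  induction hi using Nat.decreasingInduction with
  | self => exact htop
  | of_succ i hi ih =>
    exact ih.of_interlacing hr (fun j => (hadj i hi j).1) (fun j => (hadj i hi j).2)

end SmallStepLift

lemma false_of_odd_antipodal_pairing {k : ℕ} {r : ℝ} (hr : r < 4)
    {f g : ZMod (2 * k + 1) → ℝ} (hA : ∀ j, g j - f j ∈ Icc 1 (r - 1))
    (hB : ∀ j, g j - f (j + 1) ∈ Icc 1 (r - 1))
    (hC : ∀ j, 1 ≤ dist (f j : AddCircle r)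
      ((g (j + k) : AddCircle r) + ((r / 2 : ℝ) : AddCircle r))) :
    False := by
  have hr0 : 0 < r := by linarith [(hA 0).1, (hA 0).2]
  choose n hn using fun j =>
    AddCircle.exists_abs_sub_zsmul_le_of_one_le_dist_add_half hr0 (hC j)
  have hwrap : (2 * k + 1 : ZMod (2 * k + 1)) = 0 := by
    exact_mod_cast ZMod.natCast_self (2 * k + 1)
  have hpair : ∀ j, n j + n (j + k + 1) = 1 := by
    intro j
    have h := hn (j + k + 1)
    rw [show j + k + 1 + k = j by linear_combination hwrap] at h
    have h₁ := abs_le.1 (hn j)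
    have h₂ := abs_le.1 h
    have hlo : (0 : ℝ) * r < ((n j + n (j + k + 1) : ℤ) : ℝ) * r := by
      push_cast [zsmul_eq_mul] at h₁ h₂ ⊢
      linarith [(hA j).1, (hB (j + k)).1]
    have hhi : ((n j + n (j + k + 1) : ℤ) : ℝ) * r < 2 * r := by
      push_cast [zsmul_eq_mul] at h₁ h₂ ⊢
      linarith [(hA j).2, (hB (j + k)).2]
    have hpos : 0 < n j + n (j + k + 1) := by
      exact_mod_cast lt_of_mul_lt_mul_right hlo hr0.le
    have hlt : n j + n (j + k + 1) < 2 := by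
      exact_mod_cast lt_of_mul_lt_mul_right hhi hr0.le
    omega
  have hsum : ∑ j, (n j + n (j + k + 1)) = 2 * k + 1 := by
    simp [hpair, Finset.card_univ, ZMod.card]
  have hshift : ∑ j, n (j + k + 1) = ∑ j, n j := by
    simpa [add_assoc] using Equiv.sum_comp (Equiv.addRight ((k : ZMod (2 * k + 1)) + 1)) n
  rw [Finset.sum_add_distrib, hshift] at hsum
  omega

namespace IsSignedCircColoring

variable {V : Type*} {r : ℝ} {G : SimpleGraph V} {pos : V → V → Prop} {c : V → AddCircle r}

lemma one_le_dist (hc : IsSignedCircColoring r G pos c) {u v : V} (huv : G.Adj u v)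
    (h₁ : ¬ pos u v) (h₂ : ¬ pos v u) : 1 ≤ dist (c u) (c v) := by
  simpa [h₁, h₂] using hc u v huv

lemma one_le_dist_add_half (hc : IsSignedCircColoring r G pos c) {u v : V} (huv : G.Adj u v)
    (h : pos u v) : 1 ≤ dist (c u) (c v + ((r / 2 : ℝ) : AddCircle r)) := by
  simpa [h] using hc u v huv

end IsSignedCircColoring

section BQOdd

variable {ℓ k : ℕ}

lemma not_bqOddPos_of_gridRel (hk : 1 ≤ k) {x y : Fin ℓ × ZMod (2 * k + 1)}
    (h : gridRel ℓ (2 * k + 1) x y) :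
    ¬ bqOddPos ℓ k (some x) (some y) ∧ ¬ bqOddPos ℓ k (some y) (some x) := by
  obtain ⟨hrow, hcol⟩ := h
  refine ⟨fun ⟨_, _, hy⟩ => ?_, fun ⟨hy0, _, _⟩ => by omega⟩
  have hk0 : ((k : ℕ) : ZMod (2 * k + 1)) ≠ 0 := by
    rw [Ne, ZMod.natCast_eq_zero_iff]
    exact Nat.not_dvd_of_pos_of_lt (by omega) (by omega)
  have hk1 : ((k + 1 : ℕ) : ZMod (2 * k + 1)) ≠ 0 := by
    rw [Ne, ZMod.natCast_eq_zero_iff]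
    exact Nat.not_dvd_of_pos_of_lt (by omega) (by omega)
  rcases hcol with h | h <;> rw [h] at hy
  · exact hk1 (by push_cast; linear_combination -hy)
  · exact hk0 (by linear_combination -hy)

lemma one_le_dist_of_gridRel (hk : 1 ≤ k) {r : ℝ}
    {c : Option (Fin ℓ × ZMod (2 * k + 1)) → AddCircle r}
    (hc : IsSignedCircColoring r (BQOdd ℓ k) (bqOddPos ℓ k) c)
    {x y : Fin ℓ × ZMod (2 * k + 1)}
    (h : gridRel ℓ (2 * k + 1) x y) : 1 ≤ dist (c (some x)) (c (some y)) := by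
  have hne : some x ≠ some y := fun he => by cases he; exact absurd h.1 (by omega)
  exact hc.one_le_dist ((SimpleGraph.fromRel_adj _ _ _).2 ⟨hne, Or.inl (Or.inl h)⟩)
    (not_bqOddPos_of_gridRel hk h).1 (not_bqOddPos_of_gridRel hk h).2

def bqRow {X : Type*} (c : Option (Fin ℓ × ZMod (2 * k + 1)) → X) (i : ℕ)
    (j : ZMod (2 * k + 1)) : X :=
  if h : i < ℓ then c (some (⟨i, h⟩, j)) else c none

lemma one_le_dist_bqRow (hk : 1 ≤ k) {r : ℝ}
    {c : Option (Fin ℓ × ZMod (2 * k + 1)) → AddCircle r}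
    (hc : IsSignedCircColoring r (BQOdd ℓ k) (bqOddPos ℓ k) c) (i : ℕ) (hi : i < ℓ)
    (j : ZMod (2 * k + 1)) :
    1 ≤ dist (bqRow c i j) (bqRow c (i + 1) j) ∧
      1 ≤ dist (bqRow c i (j + 1)) (bqRow c (i + 1) j) := by
  by_cases hi' : i + 1 < ℓ
  · simp only [bqRow, dif_pos hi, dif_pos hi']
    exact ⟨one_le_dist_of_gridRel hk hc ⟨rfl, Or.inr rfl⟩,
      one_le_dist_of_gridRel hk hc ⟨rfl, Or.inl (add_sub_cancel_right j 1).symm⟩⟩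
  · have hapex : ∀ j', 1 ≤ dist (c (some (⟨i, hi⟩, j'))) (c none) := fun j' =>
      hc.one_le_dist ((SimpleGraph.fromRel_adj _ _ _).2
        ⟨by simp, Or.inl (show i = ℓ - 1 by omega)⟩) (fun h => h) (fun h => h)
    simp only [bqRow, dif_pos hi, dif_neg hi']
    exact ⟨hapex j, hapex (j + 1)⟩

theorem BQOdd.four_le_of_isSignedCircColoring (hℓ : 2 ≤ ℓ) (hk : 1 ≤ k) {r : ℝ}
    (hr : 2 ≤ r)
    {c : Option (Fin ℓ × ZMod (2 * k + 1)) → AddCircle r}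
    (hc : IsSignedCircColoring r (BQOdd ℓ k) (bqOddPos ℓ k) c) : 4 ≤ r := by
  by_contra! hr4
  have hrows := one_le_dist_bqRow hk hc
  have htop : HasSmallStepLift (bqRow c ℓ) := by
    rw [show bqRow c ℓ = fun _ => c none from funext fun _ => dif_neg (lt_irrefl ℓ)]
    exact hasSmallStepLift_const hr (c none)
  obtain ⟨g, hg, hgstep⟩ := HasSmallStepLift.of_chain hr4 hrows htop (i := 1) (by omega)
  obtain ⟨f, hf, hfg⟩ := exists_lift_interlacing hr4 hg hgstep
    (fun j => (hrows 0 (by omega) j).1) (fun j => (hrows 0 (by omega) j).2)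
  refine false_of_odd_antipodal_pairing hr4 (fun j => (hfg j).1) (fun j => (hfg j).2)
    fun j => ?_
  rw [hf, hg]
  simp only [bqRow, dif_pos (show 0 < ℓ by omega), dif_pos (show 1 < ℓ by omega)]
  exact hc.one_le_dist_add_half ((SimpleGraph.fromRel_adj _ _ _).2
    ⟨by simp, Or.inl (Or.inr ⟨rfl, rfl, rfl⟩)⟩) ⟨rfl, rfl, rfl⟩

end BQOdd

def bqParityColoring (ℓ k : ℕ) : Option (Fin ℓ × ZMod (2 * k + 1)) → AddCircle (4 : ℝ)
  | none => ((2 : ℝ) : AddCircle (4 : ℝ))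
  | some x => ((((x.1 : ℕ) % 2 : ℕ) : ℝ) : AddCircle (4 : ℝ))

lemma AddCircle.dist_coe_four (a b : ℝ) :
    dist (a : AddCircle (4 : ℝ)) (b : AddCircle (4 : ℝ)) =
      |a - b - round (4⁻¹ * (a - b)) * 4| := by
  rw [dist_eq_norm, ← AddCircle.coe_sub, AddCircle.norm_eq]

lemma BQOdd.isSignedCircColoring_bqParityColoring (ℓ k : ℕ) :
    IsSignedCircColoring 4 (BQOdd ℓ k) (bqOddPos ℓ k) (bqParityColoring ℓ k) := by
  have hapex : ∀ x : Fin ℓ × ZMod (2 * k + 1),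
      1 ≤ dist (bqParityColoring ℓ k (some x)) (bqParityColoring ℓ k none) ∧
      1 ≤ dist (bqParityColoring ℓ k none) (bqParityColoring ℓ k (some x)) := by
    intro x
    simp only [bqParityColoring, AddCircle.dist_coe_four]
    rcases Nat.mod_two_eq_zero_or_one (x.1 : ℕ) with hx | hx <;> rw [hx] <;> norm_num
  have hrows : ∀ p q : ℝ, p = 0 ∧ q = 1 ∨ p = 1 ∧ q = 0 →
      1 ≤ dist (p : AddCircle (4 : ℝ)) (q + ((4 / 2 : ℝ) : AddCircle (4 : ℝ))) ∧
      1 ≤ dist (p : AddCircle (4 : ℝ)) q := by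
    rintro p q (⟨rfl, rfl⟩ | ⟨rfl, rfl⟩) <;>
      rw [← AddCircle.coe_add, AddCircle.dist_coe_four, AddCircle.dist_coe_four] <;> norm_num
  rintro (_ | x) (_ | y) huv
  · exact absurd huv (SimpleGraph.irrefl _)
  · simpa [bqOddPos] using (hapex y).2
  · simpa [bqOddPos] using (hapex x).1
  · have hrow : (y.1 : ℕ) = x.1 + 1 ∨ (x.1 : ℕ) = y.1 + 1 := by
      rcases huv.2 with (⟨_, -⟩ | ⟨_, _, -⟩) | (⟨_, -⟩ | ⟨_, _, -⟩) <;> omega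
    have hparity : ((x.1 : ℕ) % 2 = 0 ∧ (y.1 : ℕ) % 2 = 1) ∨
        ((x.1 : ℕ) % 2 = 1 ∧ (y.1 : ℕ) % 2 = 0) := by
      omega
    have h := hrows (((x.1 : ℕ) % 2 : ℕ) : ℝ) (((y.1 : ℕ) % 2 : ℕ) : ℝ) (by
      rcases hparity with ⟨hx, hy⟩ | ⟨hx, hy⟩ <;> simp [hx, hy])
    split_ifs
    exacts [h.1, h.2]

/-- For integers `ℓ ≥ 2` and `k ≥ 1`, the circular chromatic number of the signed bipartite
graph `BQ̂(ℓ, 2k+1)` equals `4`. -/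
theorem chiC_BQOdd (ℓ k : ℕ) (hℓ : 2 ≤ ℓ) (hk : 1 ≤ k) :
    sInf {r : ℝ | 2 ≤ r ∧ ∃ c : Option (Fin ℓ × ZMod (2 * k + 1)) → AddCircle r,
      IsSignedCircColoring r (BQOdd ℓ k) (bqOddPos ℓ k) c} = 4 := by
  refine IsLeast.csInf_eq
    ⟨⟨by norm_num, _, BQOdd.isSignedCircColoring_bqParityColoring ℓ k⟩, ?_⟩
  rintro r ⟨hr, c, hc⟩
  exact BQOdd.four_le_of_isSignedCircColoring hℓ hk hr hc
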